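/- arXiv:math/0411373 — 4 statements merged into one kernel-verified Lean document; each statement's English description precedes it below -/
import Mathlib

section
/- Let F be a finite-dimensional commutative étale algebra over ℚ (e.g. a number field), and let M be a finite-dimensional ℚ-vector space equipped with an F-module structure. Then M is a free F-module if and only if for every a ∈ F one has Tr_ℚ(a; M) · [F:ℚ] = (dim_ℚ M) · Tr_{F/ℚ}(a), where Tr_ℚ(a; M) is the trace of the ℚ-linear map given by multiplication by a on M, and Tr_{F/ℚ} is the algebra trace. -/
/-!
A reduced finite-dimensional `ℚ`-algebra `F` is semisimple, so every `F`-module is projective,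
and a finite flat module over a semilocal ring is free as soon as its fibres `(F ⧸ P) ⊗ M` have
the same dimension `r` at every maximal ideal `P` (Stacks 02M9). Each such `P` is generated by an
idempotent `e`, and multiplication by `1 - e` projects `M` onto a complement of `P • M`, so
`Tr(1 - e; M) = dim_ℚ (M ⧸ P • M) = [F ⧸ P : ℚ] · r_P(M)`. For `M = F` the fibre rank is `1`,
so the trace condition at `a = 1 - e` says exactly `r_P(M) · [F : ℚ] = dim_ℚ M`. Conversely, on
a free module with basis indexed by `σ`, multiplication by `a` has trace `|σ| · Tr_{F/ℚ}(a)`.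
-/

open Module TensorProduct

theorem trace_lsmul_eq_card_mul_trace {k F M : Type*} [CommRing k] [CommRing F] [Algebra k F]
    [Module.Free k F] [Module.Finite k F] [AddCommGroup M] [Module k M] [Module F M]
    [IsScalarTower k F M] {σ : Type*} [Fintype σ] (c : Basis σ F M) (a : F) :
    LinearMap.trace k M (Algebra.lsmul k k M a) = Fintype.card σ * Algebra.trace k F a := by
  classical
  let b := Module.Free.chooseBasis k F
  have hdiag : ∀ p, LinearMap.toMatrix (b.smulTower c) (b.smulTower c) (Algebra.lsmul k k M a) p p
      = Algebra.leftMulMatrix b a p.1 p.1 := by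
    rintro ⟨i, j⟩
    simp [LinearMap.toMatrix_apply, Algebra.leftMulMatrix_eq_repr_mul, Basis.smulTower_repr,
      smul_smul]
  rw [LinearMap.trace_eq_matrix_trace k (b.smulTower c), Matrix.trace,
    Algebra.trace_eq_matrix_trace b, Matrix.trace]
  simp only [Matrix.diag_apply, hdiag, ← Finset.univ_product_univ, Finset.sum_product_right,
    Finset.sum_const, Finset.card_univ, nsmul_eq_mul]

section
variable {k F M : Type*} [Field k] [CommRing F] [Algebra k F] [AddCommGroup M] [Module k M]
  [Module F M] [IsScalarTower k F M]

theorem finrank_quotient_smul_top (I : Ideal F) [I.IsMaximal] :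
    finrank k (M ⧸ I • (⊤ : Submodule F M)) =
      finrank k (F ⧸ I) * finrank (F ⧸ I) ((F ⧸ I) ⊗[F] M) := by
  let := Ideal.Quotient.field I
  rw [← Module.finrank_mul_finrank k (F ⧸ I) (M ⧸ I • (⊤ : Submodule F M)),
    ((quotTensorEquivQuotSMul M I).extendScalarsOfSurjective
      Ideal.Quotient.mk_surjective).finrank_eq]

variable [FiniteDimensional k M] {e : F}

theorem trace_lsmul_one_sub_eq_finrank_quotient (he : IsIdempotentElem e) :
    LinearMap.trace k M (Algebra.lsmul k k M (1 - e)) =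
      finrank k (M ⧸ Ideal.span {e} • (⊤ : Submodule F M)) := by
  set f := Algebra.lsmul k k M (1 - e)
  have hker : (Ideal.span {e} • (⊤ : Submodule F M)).restrictScalars k = LinearMap.ker f := by
    ext x
    simp only [Submodule.restrictScalars_mem, Submodule.ideal_span_singleton_smul,
      Submodule.mem_smul_pointwise_iff_exists, Submodule.mem_top, true_and, LinearMap.mem_ker, f,
      Algebra.lsmul_coe, sub_smul, one_smul, sub_eq_zero]
    constructor
    · rintro ⟨y, rfl⟩
      rw [smul_smul, he.eq]
    · intro h
      exact ⟨x, h.symm⟩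
  have hproj : LinearMap.IsProj (LinearMap.range f) f := by
    refine ⟨LinearMap.mem_range_self f, ?_⟩
    rintro _ ⟨x, rfl⟩
    simp only [f, Algebra.lsmul_coe, smul_smul, he.one_sub.eq]
  rw [hproj.trace, ← f.quotKerEquivRange.finrank_eq, ← hker,
    (Submodule.Quotient.restrictScalarsEquiv k _).finrank_eq]

theorem trace_lsmul_one_sub_eq_finrank_mul_finrank (he : IsIdempotentElem e)
    [(Ideal.span {e}).IsMaximal] :
    LinearMap.trace k M (Algebra.lsmul k k M (1 - e)) =
      finrank k (F ⧸ Ideal.span {e}) *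
        finrank (F ⧸ Ideal.span {e}) ((F ⧸ Ideal.span {e}) ⊗[F] M) := by
  rw [trace_lsmul_one_sub_eq_finrank_quotient he, finrank_quotient_smul_top, Nat.cast_mul]

theorem finrank_fiber_mul_finrank_eq_of_trace [CharZero k] [FiniteDimensional k F]
    (he : IsIdempotentElem e) [(Ideal.span {e}).IsMaximal]
    (h : LinearMap.trace k M (Algebra.lsmul k k M (1 - e)) * finrank k F =
      finrank k M * Algebra.trace k F (1 - e)) :
    finrank (F ⧸ Ideal.span {e}) ((F ⧸ Ideal.span {e}) ⊗[F] M) * finrank k F = finrank k M := by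
  let := Ideal.Quotient.field (Ideal.span {e})
  have hF : Algebra.trace k F (1 - e) = finrank k (F ⧸ Ideal.span {e}) := by
    have : Algebra.lmul k F (1 - e) = Algebra.lsmul k k F (1 - e) := rfl
    rw [Algebra.trace_apply, this, trace_lsmul_one_sub_eq_finrank_mul_finrank he,
      (AlgebraTensorModule.rid F _ _).finrank_eq, finrank_self, Nat.cast_one, mul_one]
  rw [trace_lsmul_one_sub_eq_finrank_mul_finrank he, hF] at h
  set d := finrank k (F ⧸ Ideal.span {e})
  have hd : (d : k) ≠ 0 := Nat.cast_ne_zero.mpr finrank_pos.ne'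
  apply Nat.cast_injective (R := k)
  apply mul_left_cancel₀ hd
  push_cast
  linear_combination h

end

/-- An étale commutative algebra over ℚ (finite-dimensional and reduced, hence a
finite product of number fields).  A finite-dimensional `F`-module `M` is free over `F`
iff the trace condition `Tr_ℚ(a; M) · [F:ℚ] = (dim_ℚ M) · Tr_{F/ℚ}(a)` holds for all `a ∈ F`. -/
theorem free_iff_trace_condition
    (F : Type*) [CommRing F] [Algebra ℚ F] [FiniteDimensional ℚ F] [IsReduced F]
    (M : Type*) [AddCommGroup M] [Module ℚ M] [Module F M] [IsScalarTower ℚ F M]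
    [FiniteDimensional ℚ M] :
    Module.Free F M ↔
      ∀ a : F,
        LinearMap.trace ℚ M (Algebra.lsmul ℚ ℚ M a) * (Module.finrank ℚ F : ℚ)
          = (Module.finrank ℚ M : ℚ) * Algebra.trace ℚ F a := by
  have : IsArtinianRing F := isArtinian_of_tower ℚ inferInstance
  have := IsArtinianRing.isSemisimpleRing_of_isReduced F
  have : Module.Finite F M := Module.Finite.of_restrictScalars_finite ℚ F M
  constructor
  · intro _ a
    let c := Module.Free.chooseBasis F M
    have hdim : finrank ℚ M = Fintype.card (Module.Free.ChooseBasisIndex F M) * finrank ℚ F := by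
      rw [finrank_eq_card_basis ((Module.Free.chooseBasis ℚ F).smulTower c), Fintype.card_prod,
        ← finrank_eq_card_chooseBasisIndex, mul_comm]
    rw [trace_lsmul_eq_card_mul_trace c, hdim, Nat.cast_mul]
    ring
  · intro hcond
    have := Module.projective_of_isSemisimpleRing F M
    refine Module.free_of_flat_of_finrank_eq F M (finrank ℚ M / finrank ℚ F) fun P ↦ ?_
    obtain ⟨e, he, hP⟩ := IsSemisimpleRing.ideal_eq_span_idempotent P.asIdeal
    have : (Ideal.span {e}).IsMaximal := hP ▸ P.isMaximal
    have : Nontrivial F := RingHom.domain_nontrivial (Ideal.Quotient.mk (Ideal.span {e}))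
    rw [hP]
    exact (Nat.div_eq_of_eq_mul_left finrank_pos
      (finrank_fiber_mul_finrank_eq_of_trace he (hcond (1 - e))).symm).symm
end

section
/- Let D₁ and D₂ be finite-dimensional ℝ-algebras equipped with involutions *₁ and *₂ that are positive, meaning Tr_{D_i/ℝ}(x x^{*_i}) > 0 for all nonzero x ∈ D_i. Then the involution * on D₁ ⊗_ℝ D₂ determined by (d₁ ⊗ d₂)* = d₁^{*₁} ⊗ d₂^{*₂} is positive: Tr_{D₁⊗D₂/ℝ}(y y*) > 0 for all nonzero y ∈ D₁ ⊗_ℝ D₂. -/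
/-!
Write `τ(z) = Tr(L_z)` and `B_s(x, y) = τ(x s(y))`. Since `τ(ab) = τ(ba)`, an anti-involution `s`
makes `L_{s(a)}` the `B_s`-adjoint of `L_a`; when `B_s` is positive definite it is nondegenerate,
so `τ(s(a)) = τ(a)` and `B_s` is symmetric. On `D₁ ⊗ D₂` the trace of `L_{a ⊗ b}` is the product
of traces, so the form of the tensor involution is `B_{s₁} ⊗ B_{s₂}`. Expanding `y = ∑ⱼ aⱼ ⊗ vⱼ` in
a `B_{s₂}`-orthogonal basis `v` gives `B(y, y) = ∑ⱼ B_{s₂}(vⱼ, vⱼ) B_{s₁}(aⱼ, aⱼ) > 0`.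
-/

open TensorProduct LinearMap

theorem LinearMap.BilinForm.trace_eq_of_isAdjointPair {K V : Type*} [Field K] [AddCommGroup V]
    [Module K V] [FiniteDimensional K V] {B : LinearMap.BilinForm K V} (hB : B.Nondegenerate)
    {f g : V →ₗ[K] V} (h : IsAdjointPair B B f g) : trace K V f = trace K V g := by
  let e := B.toDual hB
  have hconj : e.conj f = Module.Dual.transpose g := by
    ext φ x
    calc B (f (e.symm φ)) x = e (e.symm φ) (g x) := h _ _
      _ = φ (g x) := by rw [e.apply_symm_apply]
  rw [← trace_conj' f e, hconj, trace_transpose']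

theorem LinearMap.BilinForm.nondegenerate_of_pos {K V : Type*} [Field K] [LinearOrder K]
    [AddCommGroup V] [Module K V] {B : LinearMap.BilinForm K V} (hB : ∀ x ≠ 0, 0 < B x x) :
    B.Nondegenerate :=
  ⟨fun x hx => by_contra fun hx0 => (hB x hx0).ne' (hx x),
    fun y hy => by_contra fun hy0 => (hB y hy0).ne' (hy y)⟩

theorem LinearMap.BilinForm.tmul_apply_self_pos {K M N : Type*} [Field K] [LinearOrder K]
    [IsStrictOrderedRing K] [AddCommGroup M] [Module K M] [AddCommGroup N] [Module K N]
    [FiniteDimensional K N] {B₁ : LinearMap.BilinForm K M} {B₂ : LinearMap.BilinForm K N}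
    (h₁ : ∀ x ≠ 0, 0 < B₁ x x) (hB₂ : B₂.IsSymm) (h₂ : ∀ x ≠ 0, 0 < B₂ x x)
    {y : M ⊗[K] N} (hy : y ≠ 0) : 0 < B₁.tmul B₂ y y := by
  let := invertibleOfNonzero (two_ne_zero : (2 : K) ≠ 0)
  obtain ⟨v, hv⟩ := exists_orthogonal_basis (isSymm_iff.mp hB₂)
  classical
  set a := TensorProduct.equivFinsuppOfBasisRight v y
  have hya : y = ∑ j, a j ⊗ₜ v j :=
    calc y = (equivFinsuppOfBasisRight v).symm a := (LinearEquiv.symm_apply_apply _ y).symm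
      _ = ∑ j, a j ⊗ₜ v j := by
        rw [equivFinsuppOfBasisRight_symm_apply, Finsupp.sum_fintype _ _ (by simp)]
  obtain ⟨j, hj⟩ : ∃ j, a j ≠ 0 := by
    by_contra! h
    exact hy ((LinearEquiv.map_eq_zero_iff _).mp (Finsupp.ext h))
  have hdiag : B₁.tmul B₂ y y = ∑ j, B₂ (v j) (v j) * B₁ (a j) (a j) := by
    rw [hya]
    simp only [map_sum, LinearMap.sum_apply, tensorDistrib_tmul, smul_eq_mul]
    refine Finset.sum_congr rfl fun i _ => Finset.sum_eq_single i (fun k _ hki => ?_) (by simp)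
    rw [hv hki, zero_mul]
  have hterm (i) : 0 ≤ B₂ (v i) (v i) * B₁ (a i) (a i) := by
    rcases eq_or_ne (a i) 0 with hi | hi
    · simp [hi]
    · exact (mul_pos (h₂ _ (v.ne_zero i)) (h₁ _ hi)).le
  rw [hdiag]
  exact Finset.sum_pos' (fun i _ => hterm i)
    ⟨j, Finset.mem_univ j, mul_pos (h₂ _ (v.ne_zero j)) (h₁ _ hj)⟩

section InvolutionTraceForm

variable {R A : Type*} [CommRing R] [Ring A] [Algebra R A]

theorem trace_mulLeft_mul_comm [Module.Free R A] [Module.Finite R A] (a b : A) :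
    trace R A (mulLeft R (a * b)) = trace R A (mulLeft R (b * a)) := by
  rw [mulLeft_mul, mulLeft_mul, ← Module.End.mul_eq_comp, ← Module.End.mul_eq_comp,
    trace_mul_comm]

noncomputable def involutionTraceForm (s : A →ₗ[R] A) : LinearMap.BilinForm R A :=
  ((mul R A).compl₂ s).compr₂ ((trace R A).comp (mul R A))

@[simp]
theorem involutionTraceForm_apply (s : A →ₗ[R] A) (x y : A) :
    involutionTraceForm s x y = trace R A (mulLeft R (x * s y)) :=
  rfl

theorem isAdjointPair_involutionTraceForm_mulLeft [Module.Free R A] [Module.Finite R A]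
    {s : A →ₗ[R] A} (hmul : ∀ x y, s (x * y) = s y * s x) (hinv : ∀ x, s (s x) = x) (a : A) :
    IsAdjointPair (involutionTraceForm s) (involutionTraceForm s)
      (mulLeft R a) (mulLeft R (s a)) := by
  intro x y
  simp only [involutionTraceForm_apply, mulLeft_apply, hmul, hinv]
  rw [mul_assoc, trace_mulLeft_mul_comm, mul_assoc]

end InvolutionTraceForm

section PositiveInvolution

variable {K A : Type*} [Field K] [LinearOrder K] [Ring A] [Algebra K A] [FiniteDimensional K A]
  {s : A →ₗ[K] A}

theorem trace_mulLeft_involution (hmul : ∀ x y, s (x * y) = s y * s x) (hinv : ∀ x, s (s x) = x)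
    (hpos : ∀ x ≠ 0, 0 < trace K A (mulLeft K (x * s x))) (a : A) :
    trace K A (mulLeft K (s a)) = trace K A (mulLeft K a) :=
  (BilinForm.trace_eq_of_isAdjointPair (BilinForm.nondegenerate_of_pos hpos)
    (isAdjointPair_involutionTraceForm_mulLeft hmul hinv a)).symm

theorem involutionTraceForm_isSymm (hmul : ∀ x y, s (x * y) = s y * s x)
    (hinv : ∀ x, s (s x) = x) (hpos : ∀ x ≠ 0, 0 < trace K A (mulLeft K (x * s x))) :
    (involutionTraceForm s).IsSymm := by
  refine ⟨fun x y => ?_⟩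
  rw [involutionTraceForm_apply, involutionTraceForm_apply,
    ← trace_mulLeft_involution hmul hinv hpos (y * s x), hmul, hinv]

end PositiveInvolution

section TensorProduct

variable {R A B : Type*} [CommRing R] [Ring A] [Algebra R A] [Ring B] [Algebra R B]
  [Module.Free R A] [Module.Finite R A] [Module.Free R B] [Module.Finite R B]

theorem trace_mulLeft_tmul (a : A) (b : B) :
    trace R (A ⊗[R] B) (mulLeft R (a ⊗ₜ b)) =
      trace R A (mulLeft R a) * trace R B (mulLeft R b) := by
  rw [mulLeft_tmul, trace_tensorProduct']

attribute [local ext] TensorProduct.ext in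
theorem involutionTraceForm_tensor {s₁ : A →ₗ[R] A} {s₂ : B →ₗ[R] B}
    {s : A ⊗[R] B →ₗ[R] A ⊗[R] B} (hs : ∀ a b, s (a ⊗ₜ b) = s₁ a ⊗ₜ s₂ b) :
    involutionTraceForm s = (involutionTraceForm s₁).tmul (involutionTraceForm s₂) := by
  ext a b a' b'
  simp [hs, trace_mulLeft_tmul, mul_comm]

end TensorProduct

theorem tensor_involution_positive_general
    (D₁ D₂ : Type*) [Ring D₁] [Ring D₂] [Algebra ℝ D₁] [Algebra ℝ D₂]
    [FiniteDimensional ℝ D₁] [FiniteDimensional ℝ D₂]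
    (s₁ : D₁ →ₗ[ℝ] D₁) (s₂ : D₂ →ₗ[ℝ] D₂)
    (hs₂mul : ∀ x y : D₂, s₂ (x * y) = s₂ y * s₂ x)
    (hs₂inv : ∀ x : D₂, s₂ (s₂ x) = x)
    (hs₁pos : ∀ x : D₁, x ≠ 0 → 0 < LinearMap.trace ℝ D₁ (LinearMap.mulLeft ℝ (x * s₁ x)))
    (hs₂pos : ∀ x : D₂, x ≠ 0 → 0 < LinearMap.trace ℝ D₂ (LinearMap.mulLeft ℝ (x * s₂ x)))
    (s : D₁ ⊗[ℝ] D₂ →ₗ[ℝ] D₁ ⊗[ℝ] D₂)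
    (hs : ∀ (d₁ : D₁) (d₂ : D₂), s (d₁ ⊗ₜ[ℝ] d₂) = s₁ d₁ ⊗ₜ[ℝ] s₂ d₂) :
    ∀ y : D₁ ⊗[ℝ] D₂, y ≠ 0 →
      0 < LinearMap.trace ℝ (D₁ ⊗[ℝ] D₂) (LinearMap.mulLeft ℝ (y * s y)) := by
  intro y hy
  have hpos := BilinForm.tmul_apply_self_pos (B₁ := involutionTraceForm s₁) hs₁pos
    (involutionTraceForm_isSymm hs₂mul hs₂inv hs₂pos) hs₂pos hy
  rwa [← involutionTraceForm_tensor hs] at hpos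

/-- The tensor product of two positive involutions on finite-dimensional real algebras
is a positive involution. -/
theorem tensor_involution_positive
    (D₁ D₂ : Type*) [Ring D₁] [Ring D₂] [Algebra ℝ D₁] [Algebra ℝ D₂]
    [FiniteDimensional ℝ D₁] [FiniteDimensional ℝ D₂]
    (s₁ : D₁ →ₗ[ℝ] D₁) (s₂ : D₂ →ₗ[ℝ] D₂)
    (hs₁mul : ∀ x y : D₁, s₁ (x * y) = s₁ y * s₁ x)
    (hs₂mul : ∀ x y : D₂, s₂ (x * y) = s₂ y * s₂ x)
    (hs₁inv : ∀ x : D₁, s₁ (s₁ x) = x)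
    (hs₂inv : ∀ x : D₂, s₂ (s₂ x) = x)
    (hs₁pos : ∀ x : D₁, x ≠ 0 → 0 < LinearMap.trace ℝ D₁ (LinearMap.mulLeft ℝ (x * s₁ x)))
    (hs₂pos : ∀ x : D₂, x ≠ 0 → 0 < LinearMap.trace ℝ D₂ (LinearMap.mulLeft ℝ (x * s₂ x)))
    (s : D₁ ⊗[ℝ] D₂ →ₗ[ℝ] D₁ ⊗[ℝ] D₂)
    (hs : ∀ (d₁ : D₁) (d₂ : D₂), s (d₁ ⊗ₜ[ℝ] d₂) = s₁ d₁ ⊗ₜ[ℝ] s₂ d₂) :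
    ∀ y : D₁ ⊗[ℝ] D₂, y ≠ 0 →
      0 < LinearMap.trace ℝ (D₁ ⊗[ℝ] D₂) (LinearMap.mulLeft ℝ (y * s y)) :=
  tensor_involution_positive_general D₁ D₂ s₁ s₂ hs₂mul hs₂inv hs₁pos hs₂pos s hs
end

section
/- Let k be an algebraically closed field, n ≥ 1, and let ' be an involution (anti-automorphism of order two) on the matrix algebra M_n(k) fixing k. Then there exists an invertible matrix c ∈ M_n(k) with either cᵗ = c or cᵗ = −c such that x' = c xᵗ c^{-1} for all x ∈ M_n(k), and c is unique up to a nonzero scalar. -/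
/-!
Put `σ x = s xᵀ`, an injective multiplicative linear endomorphism of `Mₙ(k)`. For an index `z`
and any matrix `Y`, the matrix `U = ∑ₗ σ(E_lz) Y E_zl` intertwines, `σ x * U = U * x`; hence the
kernel of `U` is stable under all of `Mₙ(k)`, so `U` is invertible as soon as it is nonzero, and a
suitable `Y` makes it nonzero (Skolem–Noether). This gives `s x = c xᵀ c⁻¹`.

Two invertible matrices inducing the same conjugation differ by a central unit, i.e. a nonzero
scalar: this is the uniqueness. Since `s` is an involution, `cᵀ` also represents `s`, so
`cᵀ = a c`, whence `c = a² c` and `a = ±1`.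
-/

open Matrix

namespace Matrix

variable {ι : Type*} [Fintype ι] [DecidableEq ι]

section CommRing

variable {R : Type*} [CommRing R]

theorem exists_units_eq_smul_one_of_forall_commute {d : Matrix ι ι R} (hd : IsUnit d)
    (h : ∀ x, Commute d x) : ∃ a : Rˣ, d = (a : R) • 1 := by
  have hcenter : hd.unit ∈ Subgroup.center (GL ι R) :=
    Subgroup.mem_center_iff.mpr fun g => Units.ext (h g).symm
  rw [GeneralLinearGroup.center_eq_range_scalar] at hcenter
  obtain ⟨a, ha⟩ := hcenter
  refine ⟨a, ?_⟩
  rw [← hd.unit_spec, ← ha]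
  simp [smul_one_eq_diagonal]

theorem exists_units_eq_smul_of_forall_mul_mul_inv_eq {c u : Matrix ι ι R} (hc : IsUnit c)
    (hu : IsUnit u) (h : ∀ x, c * x * c⁻¹ = u * x * u⁻¹) : ∃ a : Rˣ, c = (a : R) • u := by
  have hc' : IsUnit c.det := (isUnit_iff_isUnit_det c).mp hc
  have hu' : IsUnit u.det := (isUnit_iff_isUnit_det u).mp hu
  have hcomm : ∀ x, Commute (u⁻¹ * c) x := fun x => by
    calc u⁻¹ * c * x = u⁻¹ * (c * x * c⁻¹) * c := by simp [mul_assoc, hc']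
      _ = x * (u⁻¹ * c) := by simp [h, mul_assoc, hu']
  obtain ⟨a, ha⟩ := exists_units_eq_smul_one_of_forall_commute
    ((isUnit_nonsing_inv_iff.mpr hu).mul hc) hcomm
  refine ⟨a, ?_⟩
  rw [← mul_nonsing_inv_cancel_left _ c hu', ha, Matrix.mul_smul, mul_one]

theorem exists_units_transpose_eq_smul_of_involutive {s : Matrix ι ι R → Matrix ι ι R}
    (hinv : ∀ x, s (s x) = x) {u : Matrix ι ι R} (hu : IsUnit u)
    (hs : ∀ x, s x = u * xᵀ * u⁻¹) : ∃ a : Rˣ, uᵀ = (a : R) • u := by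
  have hu' : IsUnit u.det := (isUnit_iff_isUnit_det u).mp hu
  refine exists_units_eq_smul_of_forall_mul_mul_inv_eq (u.isUnit_transpose.mpr hu) hu fun x => ?_
  -- solving `xᵀ = s (s xᵀ)` for `s xᵀ` shows that `uᵀ` represents `s` as well
  have hx : (s xᵀ)ᵀ = u⁻¹ * xᵀ * u := by
    conv_rhs => rw [← hinv xᵀ, hs (s xᵀ)]
    simp [mul_assoc, hu']
  rw [← transpose_transpose x, ← hs, ← transpose_transpose (s _), hx]
  simp [mul_assoc, transpose_nonsing_inv]

theorem transpose_eq_or_eq_neg_of_transpose_eq_smul [IsDomain R] {u : Matrix ι ι R}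
    (hu : IsUnit u) {a : R} (h : uᵀ = a • u) : uᵀ = u ∨ uᵀ = -u := by
  nontriviality Matrix ι ι R
  have ha : (a * a - 1) • u = 0 := by
    rw [sub_smul, one_smul, mul_smul, ← h, ← transpose_smul, ← h, transpose_transpose, sub_self]
  have ha2 : a * a = 1 := sub_eq_zero.mp ((smul_eq_zero.mp ha).resolve_right hu.ne_zero)
  rcases mul_self_eq_one_iff.mp ha2 with rfl | rfl
  · exact Or.inl (by rw [h, one_smul])
  · exact Or.inr (by rw [h, neg_one_smul])

end CommRing

section Field

variable {k : Type*} [Field k]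

theorem isUnit_of_ne_zero_of_forall_mul_eq_mul {f : Matrix ι ι k → Matrix ι ι k}
    {U : Matrix ι ι k} (hU : ∀ x, f x * U = U * x) (hU0 : U ≠ 0) : IsUnit U := by
  rw [isUnit_iff_isUnit_det, isUnit_iff_ne_zero]
  intro hdet
  obtain ⟨y, hy0, hUy⟩ := exists_mulVec_eq_zero_iff.mpr hdet
  obtain ⟨m, hm⟩ : ∃ m, y m ≠ 0 := Function.ne_iff.mp hy0
  refine hU0 (ext fun i j => ?_)
  -- `single j m 1` maps the kernel vector `y` to a nonzero multiple of `Pi.single j 1`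
  have hcol : y m • U.col j = 0 :=
    calc y m • U.col j = U *ᵥ (single j m 1 *ᵥ y) := by
          rw [single_mulVec, ← mulVec_single_one, ← mulVec_smul]
          congr 1
          ext l
          by_cases hl : l = j <;> simp [hl]
      _ = f (single j m 1) *ᵥ (U *ᵥ y) := by rw [mulVec_mulVec, mulVec_mulVec, hU]
      _ = 0 := by rw [hUy, mulVec_zero]
  simpa [hm] using congrFun hcol i

variable {σ : Matrix ι ι k →ₗ[k] Matrix ι ι k}

variable (σ) in
def intertwiner (z : ι) (Y : Matrix ι ι k) : Matrix ι ι k :=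
  ∑ l, σ (single l z 1) * Y * single z l 1

theorem intertwiner_mul_single (z : ι) (Y : Matrix ι ι k) (a b : ι) :
    intertwiner σ z Y * single a b 1 = σ (single a z 1) * Y * single z b 1 := by
  rw [intertwiner, Finset.sum_mul, Finset.sum_eq_single a]
  · rw [mul_assoc _ (single z a 1), single_mul_single_same, one_mul]
  · intro l _ hl
    rw [mul_assoc _ (single z l 1), single_mul_single_of_ne _ _ _ _ hl, mul_zero]
  · simp

theorem map_single_mul_intertwiner (hmul : ∀ x y, σ (x * y) = σ x * σ y) (z : ι)
    (Y : Matrix ι ι k) (a b : ι) :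
    σ (single a b 1) * intertwiner σ z Y = σ (single a z 1) * Y * single z b 1 := by
  rw [intertwiner, Finset.mul_sum, Finset.sum_eq_single b]
  · rw [← mul_assoc, ← mul_assoc, ← hmul, single_mul_single_same, one_mul]
  · intro l _ hl
    rw [← mul_assoc, ← mul_assoc, ← hmul, single_mul_single_of_ne _ _ _ _ (Ne.symm hl),
      map_zero, zero_mul, zero_mul]
  · simp

theorem map_mul_intertwiner (hmul : ∀ x y, σ (x * y) = σ x * σ y) (z : ι) (Y : Matrix ι ι k)
    (x : Matrix ι ι k) : σ x * intertwiner σ z Y = intertwiner σ z Y * x := by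
  induction x using Matrix.induction_on' with
  | h_zero => simp
  | h_add p q hp hq => rw [map_add, add_mul, mul_add, hp, hq]
  | h_std_basis a b c =>
    rw [show single a b c = c • single a b 1 by simp, map_smul, Matrix.smul_mul, Matrix.mul_smul,
      map_single_mul_intertwiner hmul, intertwiner_mul_single]

theorem exists_mul_mul_single_ne_zero {A : Matrix ι ι k} (hA : A ≠ 0) (z : ι) :
    ∃ Y, A * Y * single z z 1 ≠ 0 := by
  obtain ⟨i, j, hij⟩ : ∃ i j, A i j ≠ 0 := by
    by_contra! h
    exact hA (ext h)
  refine ⟨single j z 1, fun h => hij ?_⟩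
  simpa [mul_assoc] using congrFun (congrFun h i) z

theorem exists_isUnit_map_mul_eq_mul (hmul : ∀ x y, σ (x * y) = σ x * σ y)
    (hσ : Function.Injective σ) : ∃ u, IsUnit u ∧ ∀ x, σ x * u = u * x := by
  cases isEmpty_or_nonempty ι with
  | inl _ => exact ⟨1, isUnit_one, fun _ => Subsingleton.elim _ _⟩
  | inr hι =>
    obtain ⟨z⟩ := hι
    have hz : σ (single z z 1) ≠ 0 := (map_ne_zero_iff σ hσ).mpr fun h => by
      simpa using congrFun (congrFun h z) z
    obtain ⟨Y, hY⟩ := exists_mul_mul_single_ne_zero hz z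
    have hU0 : intertwiner σ z Y ≠ 0 := fun h =>
      hY (by rw [← intertwiner_mul_single, h, zero_mul])
    have hU := map_mul_intertwiner hmul z Y
    exact ⟨_, isUnit_of_ne_zero_of_forall_mul_eq_mul hU hU0, hU⟩

end Field

end Matrix

theorem involution_matrix_algebra_general
    (k : Type*) [Field k] (n : ℕ)
    (s : Matrix (Fin n) (Fin n) k →ₗ[k] Matrix (Fin n) (Fin n) k)
    (hmul : ∀ x y, s (x * y) = s y * s x)
    (hinv : ∀ x, s (s x) = x) :
    ∃ c : Matrix (Fin n) (Fin n) k, IsUnit c ∧ (cᵀ = c ∨ cᵀ = -c) ∧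
      (∀ x, s x = c * xᵀ * c⁻¹) ∧
      (∀ c' : Matrix (Fin n) (Fin n) k, IsUnit c' → (∀ x, s x = c' * xᵀ * c'⁻¹) →
        ∃ l : k, l ≠ 0 ∧ c' = l • c) := by
  obtain ⟨c, hc, hsc⟩ := exists_isUnit_map_mul_eq_mul
    (σ := s ∘ₗ (transposeLinearEquiv (Fin n) (Fin n) k k).toLinearMap)
    (fun x y => by simp [hmul]) (Function.LeftInverse.injective hinv |>.comp transpose_injective)
  have hs : ∀ x, s x = c * xᵀ * c⁻¹ := fun x => by
    have hx : s x * c = c * xᵀ := by simpa using hsc xᵀ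
    rw [← hx, mul_nonsing_inv_cancel_right _ _ ((isUnit_iff_isUnit_det c).mp hc)]
  refine ⟨c, hc, ?_, hs, fun c' hc' hs' => ?_⟩
  · obtain ⟨a, ha⟩ := exists_units_transpose_eq_smul_of_involutive hinv hc hs
    exact transpose_eq_or_eq_neg_of_transpose_eq_smul hc ha
  · obtain ⟨a, rfl⟩ := exists_units_eq_smul_of_forall_mul_mul_inv_eq hc' hc fun x => by
      simpa using (hs' xᵀ).symm.trans (hs xᵀ)
    exact ⟨a, a.ne_zero, rfl⟩

/-- Any involution of the matrix algebra `Mₙ(k)` fixing `k` is of the form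
`x ↦ c xᵀ c⁻¹` for an invertible symmetric or antisymmetric matrix `c`,
unique up to a nonzero scalar. -/
theorem involution_matrix_algebra
    (k : Type*) [Field k] [IsAlgClosed k] (n : ℕ) (hn : 1 ≤ n)
    (s : Matrix (Fin n) (Fin n) k →ₗ[k] Matrix (Fin n) (Fin n) k)
    (hone : s 1 = 1)
    (hmul : ∀ x y, s (x * y) = s y * s x)
    (hinv : ∀ x, s (s x) = x) :
    ∃ c : Matrix (Fin n) (Fin n) k, IsUnit c ∧ (cᵀ = c ∨ cᵀ = -c) ∧
      (∀ x, s x = c * xᵀ * c⁻¹) ∧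
      (∀ c' : Matrix (Fin n) (Fin n) k, IsUnit c' → (∀ x, s x = c' * xᵀ * c'⁻¹) →
        ∃ l : k, l ≠ 0 ∧ c' = l • c) :=
  involution_matrix_algebra_general k n s hmul hinv
end

section
/- Let r ≥ 1 and f ≥ 1 be integers and consider the set of lattice points P = {((r−κ)f, (j−1)f + ℓ) : 1 ≤ j ≤ j+κ ≤ r, 0 ≤ ℓ ≤ f−1} inside the rectangle [0, 2rf] × [0, rf] (the positions of the deformation parameters t^ℓ_{κ+j,j}). Then the number of points of P lying on or above the straight line from (0,0) to (2rf, rf) (the supersingular Newton polygon of slope 1/2) equals ∑_{i=1}^{r} ⌊i f / 2⌋. -/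
/-!
The point `((r-κ)f, (j-1)f+ℓ)` only depends on the column index `m = r-κ` and on
`(j-1)f+ℓ`, and writing `y = (j-1)f+ℓ` in base `f` shows that for `1 ≤ m ≤ r` the points in
column `mf` are exactly `(mf, y)` with `y < mf`. Among these, the ones on or above the line
`2y ≥ x` are those with `⌈mf/2⌉ ≤ y < mf`, and there are `⌊mf/2⌋` of them.
-/

open Finset

theorem Nat.card_filter_range_le_two_mul (n : ℕ) :
    #{y ∈ range n | n ≤ 2 * y} = n / 2 := by
  have h : {y ∈ range n | n ≤ 2 * y} = Ico ((n + 1) / 2) n := by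
    ext y
    simp only [mem_filter, mem_range, mem_Ico]
    omega
  rw [h, Nat.card_Ico]
  omega

theorem card_filter_singleton_product_le_two_mul (n : ℕ) :
    #{q ∈ {n} ×ˢ range n | q.1 ≤ 2 * q.2} = n / 2 := by
  rw [singleton_product, filter_map, card_map]
  exact Nat.card_filter_range_le_two_mul n

section

variable (r f : ℕ)

def deformationPositions : Finset (ℕ × ℕ) :=
  (((range f) ×ˢ (range r) ×ˢ (Icc 1 r)).filter
    (fun t : ℕ × ℕ × ℕ => t.2.2 + t.2.1 ≤ r)).image
    (fun t : ℕ × ℕ × ℕ => ((r - t.2.1) * f, (t.2.2 - 1) * f + t.1))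

variable {r f}

theorem mem_deformationPositions {q : ℕ × ℕ} :
    q ∈ deformationPositions r f ↔ ∃ m ∈ Icc 1 r, q.1 = m * f ∧ q.2 < m * f := by
  obtain ⟨x, y⟩ := q
  simp only [deformationPositions, mem_image, mem_filter, mem_product, mem_range, mem_Icc,
    Prod.mk.injEq, Prod.exists]
  constructor
  · rintro ⟨ℓ, κ, j, ⟨⟨hℓ, hκ, hj, -⟩, hjκ⟩, rfl, rfl⟩
    have hjf : j * f ≤ (r - κ) * f := Nat.mul_le_mul_right f (by omega)
    have hsucc : (j - 1) * f + f = j * f := by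
      rw [← Nat.succ_mul, Nat.succ_eq_add_one, Nat.sub_add_cancel hj]
    exact ⟨r - κ, ⟨by omega, by omega⟩, rfl, by omega⟩
  · rintro ⟨m, ⟨hm, hmr⟩, rfl, hy⟩
    have hf : 0 < f := Nat.pos_of_mul_pos_left (Nat.zero_lt_of_lt hy)
    have hdiv : y / f < m := (Nat.div_lt_iff_lt_mul hf).mpr hy
    refine ⟨y % f, r - m, y / f + 1,
      ⟨⟨Nat.mod_lt y hf, by omega, Nat.le_add_left 1 _, by omega⟩, by omega⟩,
      by rw [Nat.sub_sub_self hmr], by rw [Nat.add_sub_cancel, Nat.div_add_mod']⟩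

theorem deformationPositions_eq_biUnion :
    deformationPositions r f = (Icc 1 r).biUnion fun m => {m * f} ×ˢ range (m * f) := by
  ext q
  simp only [mem_deformationPositions, mem_biUnion, mem_product, mem_singleton, mem_range]

theorem pairwiseDisjoint_columns (hf : 0 < f) (s : Finset ℕ) :
    (s : Set ℕ).PairwiseDisjoint fun m => {m * f} ×ˢ range (m * f) := by
  intro m _ m' _ hmm'
  refine disjoint_left.mpr fun q hq hq' => hmm' (Nat.eq_of_mul_eq_mul_right hf ?_)
  rw [mem_product, mem_singleton] at hq hq'
  rw [← hq.1, ← hq'.1]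

end

theorem supersingular_stratum_dimension_general (r f : ℕ) :
    (((((Finset.range f) ×ˢ (Finset.range r) ×ˢ (Finset.Icc 1 r)).filter
        (fun t : ℕ × ℕ × ℕ => t.2.2 + t.2.1 ≤ r)).image
        (fun t : ℕ × ℕ × ℕ => ((r - t.2.1) * f, (t.2.2 - 1) * f + t.1))).filter
        (fun q : ℕ × ℕ => q.1 ≤ 2 * q.2)).card
      = ∑ i ∈ Finset.Icc 1 r, i * f / 2 := by
  change #{q ∈ deformationPositions r f | q.1 ≤ 2 * q.2} = _
  rcases f.eq_zero_or_pos with rfl | hf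
  · simp [deformationPositions]
  rw [deformationPositions_eq_biUnion, filter_biUnion,
    card_biUnion ((pairwiseDisjoint_columns hf _).mono fun _ => filter_subset _ _)]
  exact sum_congr rfl fun m _ => card_filter_singleton_product_le_two_mul (m * f)

/-- The number of positions `((r-κ)f, (j-1)f+ℓ)` (for `0 ≤ ℓ < f`, `0 ≤ κ`, `1 ≤ j`,
`j + κ ≤ r`) lying on or above the line of slope `1/2` through the origin equals
`∑_{i=1}^{r} ⌊i f / 2⌋`, the dimension of the supersingular Newton stratum. -/
theorem supersingular_stratum_dimension (r f : ℕ) (hr : 1 ≤ r) (hf : 1 ≤ f) :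
    (((((Finset.range f) ×ˢ (Finset.range r) ×ˢ (Finset.Icc 1 r)).filter
        (fun t : ℕ × ℕ × ℕ => t.2.2 + t.2.1 ≤ r)).image
        (fun t : ℕ × ℕ × ℕ => ((r - t.2.1) * f, (t.2.2 - 1) * f + t.1))).filter
        (fun q : ℕ × ℕ => q.1 ≤ 2 * q.2)).card
      = ∑ i ∈ Finset.Icc 1 r, i * f / 2 :=
  supersingular_stratum_dimension_general r f
end
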